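/- Suppose b₁...bₙ immediately follows a₁...aₙ in the full Gray code of words, and i < n is the unique index with bᵢ = aᵢ ± 1. Then either a_k = 1 for all k > i, or a_k = 2k−1 for all k > i. -/

import Mathlib

/-!
Write a position in the code of length `n + 1` as `(2n+1)q + r` with `r < 2n+1`: the word there
is the `q`-th word of the code of length `n` followed by a last letter determined by `q` and `r`.
Within a block only the last letter changes. Across a block boundary the last letter sits at its
extreme value (`2n+1` after an increasing block, `1` after a decreasing one) and the change happens
where the shorter code changes; since `2n+1` is odd, `q` has the parity of the position. So, by
induction on `n`, all letters of the earlier word after the changed position are maximal when its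
position is even and equal to `1` when it is odd.
-/

/-- The full Gray code of words: for `n = 0` the single empty word; words of
the length-`n` code at even (0-indexed, i.e. odd 1-indexed) positions are
extended by last letters `1, 2, …, 2(n+1)-1` in increasing order, those at odd
(0-indexed) positions by the same last letters in decreasing order. -/
def grayCode : ℕ → List (List ℕ)
  | 0 => [[]]
  | n+1 =>
      (((grayCode n).zipIdx.map Prod.swap).map (fun p =>
        if p.1 % 2 = 0 then
          (List.range (2*n + 1)).map (fun j => p.2 ++ [j + 1])
        else
          ((List.range (2*n + 1)).map (fun j => p.2 ++ [j + 1])).reverse)).flatten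

/-- The 1-indexed `i`-th letter of a word. -/
def wd (a : List ℕ) (i : ℕ) : ℕ := a.getD (i - 1) 0

/-- A word `a₁…aₙ` is arc-disconnected if there is a `k ≥ 2` with
`a_k = 2k-1` and `a_j ≥ 2k-1` for all `j > k`. -/
def ArcDiscL (a : List ℕ) : Prop :=
  ∃ k, 2 ≤ k ∧ k ≤ a.length ∧ wd a k = 2*k - 1 ∧
    ∀ j, k < j → j ≤ a.length → 2*k - 1 ≤ wd a j

theorem List.getElem?_flatten_of_forall_length_eq {α : Type*} {c : ℕ} {L : List (List α)}
    (hL : ∀ l ∈ L, l.length = c) (q : ℕ) {r : ℕ} (hr : r < c) :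
    L.flatten[c * q + r]? = L[q]?.bind (·[r]?) := by
  induction L generalizing q with
  | nil => simp
  | cons l L ih =>
    have hl : l.length = c := hL l List.mem_cons_self
    cases q with
    | zero => simp [List.getElem?_append_left (hl ▸ hr : r < l.length)]
    | succ q =>
      rw [List.flatten_cons, show c * (q + 1) + r = c * q + r + l.length by rw [hl]; ring,
        List.getElem?_append_right (by omega), Nat.add_sub_cancel,
        ih (fun l' hl' => hL l' (List.mem_cons_of_mem _ hl')) q]
      simp

theorem length_of_mem_grayCode {n : ℕ} {a : List ℕ} (ha : a ∈ grayCode n) : a.length = n := by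
  induction n generalizing a with
  | zero => simp_all [grayCode]
  | succ n ih =>
    simp only [grayCode, List.mem_flatten, List.mem_map, Prod.exists] at ha
    obtain ⟨_, ⟨k, w, ⟨w', k', hmem, hswap⟩, rfl⟩, ha⟩ := ha
    obtain ⟨rfl, rfl⟩ := Prod.ext_iff.mp hswap
    have hw : w' ∈ grayCode n := List.fst_mem_of_mem_zipIdx hmem
    split_ifs at ha <;> simp only [List.mem_reverse, List.mem_map] at ha <;>
      obtain ⟨j, _, rfl⟩ := ha <;> simp [ih hw]

def grayLetter (n q r : ℕ) : ℕ := if q % 2 = 0 then r + 1 else 2 * n + 1 - r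

theorem grayLetter_two_mul (n q : ℕ) :
    grayLetter n q (2 * n) = if q % 2 = 0 then 2 * (n + 1) - 1 else 1 := by
  unfold grayLetter
  split_ifs <;> omega

theorem grayCode_succ_getElem? (n q : ℕ) {r : ℕ} (hr : r < 2 * n + 1) :
    (grayCode (n + 1))[(2 * n + 1) * q + r]? =
      (grayCode n)[q]?.map (· ++ [grayLetter n q r]) := by
  rw [grayCode, List.getElem?_flatten_of_forall_length_eq _ q hr]
  · cases hq : (grayCode n)[q]? with
    | none => simp [List.getElem?_zipIdx, hq]
    | some w =>
      simp only [List.getElem?_map, List.getElem?_zipIdx, hq, Option.map_some, Option.bind_some,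
        Prod.swap_prod_mk, Nat.zero_add, grayLetter]
      split_ifs
      · simp [hr]
      · rw [List.getElem?_reverse (by simpa using hr), List.length_map, List.length_range,
          List.getElem?_map, List.getElem?_range (by omega), Option.map_some]
        congr 3
        omega
  · intro l hl
    simp only [List.mem_map] at hl
    obtain ⟨p, _, rfl⟩ := hl
    split_ifs <;> simp

theorem wd_append_singleton_of_le {w : List ℕ} {k : ℕ} (x : ℕ) (hk₁ : 1 ≤ k)
    (hk : k ≤ w.length) : wd (w ++ [x]) k = wd w k := by
  rw [wd, wd, List.getD_append _ _ _ _ (by omega)]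

theorem wd_append_singleton_of_eq {w : List ℕ} {k : ℕ} (x : ℕ) (hk : k = w.length + 1) :
    wd (w ++ [x]) k = x := by
  simp [wd, hk]

theorem exists_wd_ne_and_tail_of_grayCode {n m : ℕ} {a b : List ℕ}
    (ha : (grayCode n)[m]? = some a) (hb : (grayCode n)[m + 1]? = some b) :
    ∃ i, 1 ≤ i ∧ i ≤ n ∧ wd b i ≠ wd a i ∧
      ∀ k, i < k → k ≤ n → wd a k = if m % 2 = 0 then 2 * k - 1 else 1 := by
  induction n generalizing m a b with
  | zero => simp [grayCode] at hb
  | succ n ih =>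
    obtain ⟨q, r, hr, rfl⟩ : ∃ q r, r < 2 * n + 1 ∧ m = (2 * n + 1) * q + r :=
      ⟨m / (2 * n + 1), m % (2 * n + 1), Nat.mod_lt _ (by omega), (Nat.div_add_mod _ _).symm⟩
    rw [grayCode_succ_getElem? n q hr] at ha
    obtain ⟨w, hw, rfl⟩ := Option.map_eq_some_iff.mp ha
    have hwlen : w.length = n := length_of_mem_grayCode (List.mem_of_getElem? hw)
    by_cases hr' : r + 1 < 2 * n + 1
    · rw [add_assoc, grayCode_succ_getElem? n q hr'] at hb
      obtain ⟨w', hw', rfl⟩ := Option.map_eq_some_iff.mp hb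
      obtain rfl : w' = w := Option.some.inj (hw'.symm.trans hw)
      refine ⟨n + 1, by omega, le_rfl, ?_, fun k hk hkn => by omega⟩
      rw [wd_append_singleton_of_eq _ (by omega), wd_append_singleton_of_eq _ (by omega),
        grayLetter, grayLetter]
      split_ifs <;> omega
    · obtain rfl : r = 2 * n := by omega
      have hm : (2 * n + 1) * q + 2 * n + 1 = (2 * n + 1) * (q + 1) + 0 := by ring
      rw [hm, grayCode_succ_getElem? n (q + 1) (by omega)] at hb
      obtain ⟨w', hw', rfl⟩ := Option.map_eq_some_iff.mp hb
      have hw'len : w'.length = n := length_of_mem_grayCode (List.mem_of_getElem? hw')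
      have hparity : ((2 * n + 1) * q + 2 * n) % 2 = q % 2 := by
        rw [show (2 * n + 1) * q + 2 * n = q + 2 * (n * q + n) by ring]
        omega
      obtain ⟨i, hi₁, hin, hne, htail⟩ := ih hw hw'
      refine ⟨i, hi₁, by omega, ?_, fun k hk hkn => ?_⟩
      · rwa [wd_append_singleton_of_le _ hi₁ (by omega),
          wd_append_singleton_of_le _ hi₁ (by omega)]
      · rw [hparity]
        obtain hkn | rfl : k ≤ n ∨ k = n + 1 := by omega
        · rw [wd_append_singleton_of_le _ (by omega) (by omega), htail k hk hkn]
        · rw [wd_append_singleton_of_eq _ (by omega), grayLetter_two_mul]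

theorem stmt_12_general (n m : ℕ) (a b : List ℕ)
    (ha : (grayCode n)[m]? = some a) (hb : (grayCode n)[m+1]? = some b)
    (i : ℕ)
    (hagree : ∀ j, j ≠ i → wd b j = wd a j) :
    (∀ k, i < k → k ≤ n → wd a k = 1) ∨ (∀ k, i < k → k ≤ n → wd a k = 2*k - 1) := by
  obtain ⟨i₀, -, -, hne, htail⟩ := exists_wd_ne_and_tail_of_grayCode ha hb
  obtain rfl : i₀ = i := by
    by_contra h
    exact hne (hagree i₀ h)
  rcases Nat.mod_two_eq_zero_or_one m with hm | hm
  · exact .inr fun k hk hkn => by simpa [hm] using htail k hk hkn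
  · exact .inl fun k hk hkn => by simpa [hm] using htail k hk hkn

/-- If `b` immediately follows `a` in the full Gray code and the
unique differing (1-indexed) position `i` satisfies `i < n`, then either
`a_k = 1` for all `k > i`, or `a_k = 2k-1` for all `k > i`. -/
theorem stmt_12 (n m : ℕ) (a b : List ℕ)
    (ha : (grayCode n)[m]? = some a) (hb : (grayCode n)[m+1]? = some b)
    (i : ℕ) (hi1 : 1 ≤ i) (hi2 : i < n)
    (hdiff : wd b i = wd a i + 1 ∨ wd a i = wd b i + 1)
    (hagree : ∀ j, j ≠ i → wd b j = wd a j) :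
    (∀ k, i < k → k ≤ n → wd a k = 1) ∨ (∀ k, i < k → k ≤ n → wd a k = 2*k - 1) :=
  stmt_12_general n m a b ha hb i hagree
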